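/- arXiv:2307.14286 — 5 statements merged into one kernel-verified Lean document; each statement's English description precedes it below -/
import Mathlib

section
/- Let t > 0, L > 0 and let κ : [0,L] → [0,∞) be continuous and not constant. Then (1/L)·∫₀^L κ(s)²/(1 + t·κ(s)) ds < F_t( (1/L)·∫₀^L κ(s)² ds ), where F_t(x) = x/(1 + t·√x). -/
/-!
`F_t` is strictly concave, so it lies strictly below its tangent lines away from the point of
tangency; at `x = b²` the tangent slope is `F_t'(b²) = (2 + t b) / (2 (1 + t b)²)`. Taking `b²`
to be the mean `m` of `κ²` and integrating the tangent inequality at `x = κ(s)²`, the linear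
term averages to zero, which leaves `⨍ κ²/(1 + tκ) < F_t(m)`; strictness comes from a point
where `κ(s) ≠ √m`, which exists because `κ` is not constant.
-/

open intervalIntegral Set

lemma tangent_sub_sq_div_one_add_mul {t a b : ℝ} (ha : 1 + t * a ≠ 0) (hb : 1 + t * b ≠ 0) :
    b ^ 2 / (1 + t * b) + (2 + t * b) / (2 * (1 + t * b) ^ 2) * (a ^ 2 - b ^ 2)
        - a ^ 2 / (1 + t * a) =
      t * (a - b) ^ 2 * (2 * a + b + t * a * b) / (2 * (1 + t * a) * (1 + t * b) ^ 2) := by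
  rw [div_mul_eq_mul_div, div_add_div _ _ hb (by simp [hb]), div_sub_div _ _ (by simp [hb]) ha,
    div_eq_div_iff (by simp [ha, hb]) (by simp [ha, hb])]
  ring

lemma sq_div_one_add_mul_le_tangent {t a b : ℝ} (ht : 0 ≤ t) (ha : 0 ≤ a) (hb : 0 ≤ b) :
    a ^ 2 / (1 + t * a) ≤
      b ^ 2 / (1 + t * b) + (2 + t * b) / (2 * (1 + t * b) ^ 2) * (a ^ 2 - b ^ 2) := by
  rw [← sub_nonneg, tangent_sub_sq_div_one_add_mul (by positivity) (by positivity)]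
  positivity

lemma sq_div_one_add_mul_lt_tangent {t a b : ℝ} (ht : 0 < t) (ha : 0 ≤ a) (hb : 0 ≤ b)
    (hab : a ≠ b) :
    a ^ 2 / (1 + t * a) <
      b ^ 2 / (1 + t * b) + (2 + t * b) / (2 * (1 + t * b) ^ 2) * (a ^ 2 - b ^ 2) := by
  rw [← sub_pos, tangent_sub_sq_div_one_add_mul (by positivity) (by positivity)]
  have hsq : 0 < (a - b) ^ 2 := pow_two_pos_of_ne_zero (sub_ne_zero.mpr hab)
  have hsum : 0 < 2 * a + b + t * a * b := by
    rcases ha.lt_or_eq with ha' | rfl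
    · positivity
    · simpa using hb.lt_of_ne hab
  positivity

lemma average_lt_of_le_affine_of_exists_lt {f g : ℝ → ℝ} {a b A c : ℝ} (hab : a < b)
    (hf : ContinuousOn f (Icc a b)) (hg : ContinuousOn g (Icc a b))
    (hle : ∀ s ∈ Icc a b, g s ≤ A + c * (f s - (b - a)⁻¹ * ∫ x in a..b, f x))
    (hlt : ∃ s ∈ Icc a b, g s < A + c * (f s - (b - a)⁻¹ * ∫ x in a..b, f x)) :
    (b - a)⁻¹ * ∫ x in a..b, g x < A := by
  set M := (b - a)⁻¹ * ∫ x in a..b, f x with hM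
  have hba : 0 < b - a := sub_pos.mpr hab
  have hfi : IntervalIntegrable f MeasureTheory.volume a b := hf.intervalIntegrable_of_Icc hab.le
  have hint : ∫ x in a..b, (A + c * (f x - M)) = (b - a) * A := by
    rw [integral_add intervalIntegrable_const ((hfi.sub intervalIntegrable_const).const_mul c),
      integral_const_mul, integral_sub hfi intervalIntegrable_const, integral_const,
      integral_const, hM, smul_eq_mul, smul_eq_mul]
    field_simp [hba.ne']
    ring
  have hlt' := integral_lt_integral_of_continuousOn_of_le_of_exists_lt
    (g := fun x => A + c * (f x - M)) hab hg
    (continuousOn_const.add (continuousOn_const.mul (hf.sub continuousOn_const)))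
    (fun s hs => hle s (Ioc_subset_Icc_self hs)) hlt
  rw [hint] at hlt'
  calc (b - a)⁻¹ * ∫ x in a..b, g x < (b - a)⁻¹ * ((b - a) * A) := by gcongr
    _ = A := inv_mul_cancel_left₀ hba.ne' A

lemma integral_sq_pos_of_ne_zero {f : ℝ → ℝ} {a b : ℝ} (hab : a < b)
    (hf : ContinuousOn f (Icc a b)) (hne : ∃ s ∈ Icc a b, f s ≠ 0) :
    0 < ∫ x in a..b, f x ^ 2 := by
  obtain ⟨s, hs, hfs⟩ := hne
  exact integral_pos hab (hf.pow 2) (fun x _ => sq_nonneg _) ⟨s, hs, by positivity⟩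

/-- Jensen's strict inequality for the strictly concave function
`F_t(x) = x / (1 + t √x)` applied to the square of a nonnegative, continuous,
non-constant function `κ` on `[0, L]`:
`(1/L) ∫₀ᴸ κ²/(1 + tκ) < F_t((1/L) ∫₀ᴸ κ²)`. -/
theorem stmt_2 (t L : ℝ) (ht : 0 < t) (hL : 0 < L) (κ : ℝ → ℝ)
    (hκcont : ContinuousOn κ (Set.Icc 0 L))
    (hκnonneg : ∀ s ∈ Set.Icc 0 L, 0 ≤ κ s)
    (hκnonconst : ¬ ∃ c : ℝ, ∀ s ∈ Set.Icc 0 L, κ s = c) :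
    (1 / L) * ∫ s in (0 : ℝ)..L, (κ s) ^ 2 / (1 + t * κ s) <
      ((1 / L) * ∫ s in (0 : ℝ)..L, (κ s) ^ 2) /
        (1 + t * Real.sqrt ((1 / L) * ∫ s in (0 : ℝ)..L, (κ s) ^ 2)) := by
  push Not at hκnonconst
  set m := (1 / L) * ∫ s in (0 : ℝ)..L, (κ s) ^ 2
  have hm_pos : 0 < m :=
    mul_pos (by positivity) (integral_sq_pos_of_ne_zero hL hκcont (hκnonconst 0))
  have hsq : √m ^ 2 = m := Real.sq_sqrt hm_pos.le
  have hmean : (L - 0)⁻¹ * ∫ s in (0 : ℝ)..L, (κ s) ^ 2 = √m ^ 2 := by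
    rw [hsq, sub_zero, ← one_div]
  obtain ⟨s₁, hs₁, hne⟩ := hκnonconst √m
  have hg : ContinuousOn (fun s => κ s ^ 2 / (1 + t * κ s)) (Icc 0 L) :=
    (hκcont.pow 2).div (continuousOn_const.add (continuousOn_const.mul hκcont))
      fun s hs => by have := hκnonneg s hs; positivity
  have key := average_lt_of_le_affine_of_exists_lt (f := fun s => κ s ^ 2)
    (A := √m ^ 2 / (1 + t * √m)) (c := (2 + t * √m) / (2 * (1 + t * √m) ^ 2))
    hL (hκcont.pow 2) hg
    (fun s hs => by
      rw [hmean]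
      exact sq_div_one_add_mul_le_tangent ht.le (hκnonneg s hs) (Real.sqrt_nonneg m))
    ⟨s₁, hs₁, by
      rw [hmean]
      exact sq_div_one_add_mul_lt_tangent ht (hκnonneg s₁ hs₁) (Real.sqrt_nonneg m) hne⟩
  rwa [sub_zero, ← one_div, hsq] at key
end

section
/- Let R > 0, t > 0, and let L be a real number with L > 2πR. Let κ : [0,L] → [0,∞) be continuous, not constant, and satisfy ∫₀^L κ(s)² ds = 2π/R. Then ∫₀^L κ(s)²/(1 + t·κ(s)) ds < L/(R·(R + t)). -/
open Real intervalIntegral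

/-- Let `R > 0`, `t > 0` and `L > 2πR`. If `κ : [0,L] → [0,∞)` is continuous,
not constant, and `∫₀ᴸ κ² = 2π/R`, then `∫₀ᴸ κ²/(1 + tκ) < L/(R(R+t))`. -/
theorem stmt_3 (R t L : ℝ) (hR : 0 < R) (ht : 0 < t) (hL : 2 * Real.pi * R < L)
    (κ : ℝ → ℝ)
    (hκcont : ContinuousOn κ (Set.Icc 0 L))
    (hκnonneg : ∀ s ∈ Set.Icc 0 L, 0 ≤ κ s)
    (hκnonconst : ¬ ∃ c : ℝ, ∀ s ∈ Set.Icc 0 L, κ s = c)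
    (hκsq : ∫ s in (0 : ℝ)..L, (κ s) ^ 2 = 2 * Real.pi / R) :
    ∫ s in (0 : ℝ)..L, (κ s) ^ 2 / (1 + t * κ s) < L / (R * (R + t)) := by
  have hpi : (0:ℝ) < Real.pi := Real.pi_pos
  have hL0 : (0:ℝ) < L := by nlinarith
  have hRt : (0:ℝ) < R + t := by linarith
  have h2Rt : (0:ℝ) < 2*R + t := by linarith
  set A : ℝ := R*(2*R+t)/(2*(R+t)^2) with hA
  set B : ℝ := t/(2*R*(R+t)^2) with hB
  have hApos : 0 < A := by positivity
  have hBpos : 0 < B := by positivity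
  -- pointwise bound
  have key : ∀ s ∈ Set.Icc (0:ℝ) L, (κ s)^2/(1 + t*κ s) ≤ A * (κ s)^2 + B := by
    intro s hs
    have hx : 0 ≤ κ s := hκnonneg s hs
    set x := κ s with hxdef
    have hden : 0 < 1 + t*x := by nlinarith
    rw [div_le_iff₀ hden]
    have factor : (A*x^2 + B) * (1 + t*x) - x^2
        = A*t*(x - 1/R)^2*(x + 1/(2*R+t)) := by
      rw [hA, hB]; field_simp; ring
    have hnn : 0 ≤ A*t*(x - 1/R)^2*(x + 1/(2*R+t)) := by
      apply mul_nonneg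
      · positivity
      · have : 0 < 1/(2*R+t) := by positivity
        linarith
    linarith [factor, hnn]
  -- denominator positive on the interval
  have hdenpos : ∀ s ∈ Set.Icc (0:ℝ) L, (0:ℝ) < 1 + t * κ s := by
    intro s hs
    have hx : 0 ≤ κ s := hκnonneg s hs
    nlinarith
  -- integrability
  have hcontLHS : ContinuousOn (fun s => (κ s)^2/(1 + t*κ s)) (Set.Icc 0 L) := by
    apply ContinuousOn.div
    · exact (hκcont.pow 2)
    · exact continuousOn_const.add (continuousOn_const.mul hκcont)
    · intro s hs; exact ne_of_gt (hdenpos s hs)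
  have hintLHS : IntervalIntegrable (fun s => (κ s)^2/(1 + t*κ s))
      MeasureTheory.volume 0 L :=
    hcontLHS.intervalIntegrable_of_Icc hL0.le
  have hintsq : IntervalIntegrable (fun s => (κ s)^2) MeasureTheory.volume 0 L :=
    (hκcont.pow 2).intervalIntegrable_of_Icc hL0.le
  have hintRHS : IntervalIntegrable (fun s => A * (κ s)^2 + B)
      MeasureTheory.volume 0 L :=
    ((hintsq.const_mul A).add intervalIntegrable_const)
  have hmono : (∫ s in (0:ℝ)..L, (κ s)^2/(1 + t*κ s))
      ≤ ∫ s in (0:ℝ)..L, (A * (κ s)^2 + B) :=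
    intervalIntegral.integral_mono_on hL0.le hintLHS hintRHS key
  have hRHSval : (∫ s in (0:ℝ)..L, (A * (κ s)^2 + B))
      = A * (2 * Real.pi / R) + B * L := by
    rw [intervalIntegral.integral_add (hintsq.const_mul A) intervalIntegrable_const,
      intervalIntegral.integral_const_mul, hκsq, intervalIntegral.integral_const]
    simp
    ring
  have hfinal : A * (2 * Real.pi / R) + B * L < L / (R * (R + t)) := by
    have hlt : 2 * Real.pi / R < L / R^2 := by
      rw [div_lt_div_iff₀ hR (by positivity)]
      nlinarith
    have h1 : A * (2 * Real.pi / R) + B * L < A * (L / R^2) + B * L := by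
      nlinarith
    have h2 : A * (L / R^2) + B * L = L / (R * (R + t)) := by
      rw [hA, hB]; field_simp; ring
    linarith
  calc (∫ s in (0:ℝ)..L, (κ s)^2/(1 + t*κ s))
      ≤ A * (2 * Real.pi / R) + B * L := by rw [← hRHSval]; exact hmono
    _ < L / (R * (R + t)) := hfinal
end

section
/- Let α ∈ ℝ and 0 < R₁ < R₂. Let f : [R₁,∞) → ℝ be continuously differentiable with 0 < ∫_{R₁}^∞ f(r)²·r dr < ∞ and ∫_{R₁}^∞ f'(r)²·r dr < ∞, and assume N₁ := ∫_{R₁}^∞ ( f'(r)² + f(r)²/r² )·r dr + α·R₁·f(R₁)² < 0. Define f₂ : [R₂,∞) → ℝ by f₂(r) := f(r + R₁ − R₂). Then [ ∫_{R₂}^∞ ( f₂'(r)² + f₂(r)²/r² )·r dr + α·R₂·f₂(R₂)² ] / ∫_{R₂}^∞ f₂(r)²·r dr < N₁ / ∫_{R₁}^∞ f(r)²·r dr. -/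
/-!
Translating the profile outward by `s = R₂ - R₁` replaces the weight `r` by `t + s`, and
`t + s ≤ (R₂ / R₁) t` for `t ≥ R₁` with equality only at `t = R₁`, while the term `f² / r²` only
decreases. Hence the quadratic form at radius `R₂` is at most `R₂ / R₁` times the one at `R₁` (the
boundary term scales exactly by `R₂ / R₁`), whereas the weighted `L²` norm grows by strictly less
than that factor. As the form is negative, the quotient strictly decreases.
-/

open MeasureTheory Set

theorem setIntegral_Ioi_eq_comp_add {E : Type*} [NormedAddCommGroup E] [NormedSpace ℝ E]
    (g : ℝ → E) (a b : ℝ) :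
    ∫ x in Ioi b, g x = ∫ x in Ioi a, g (x + (b - a)) := by
  rw [← (measurePreserving_add_right volume (b - a)).setIntegral_preimage_emb
    (measurableEmbedding_addRight (b - a)) g (Ioi b)]
  congr 1
  ext x
  simp

theorem setIntegral_mul_lt_mul_setIntegral {X : Type*} [MeasurableSpace X] {μ : Measure X}
    {s : Set X} {g w : X → ℝ} {c : ℝ} (hs : MeasurableSet s) (hg : ∀ x ∈ s, 0 ≤ g x)
    (hw : ∀ x ∈ s, w x < c) (hgi : IntegrableOn g s μ)
    (hgwi : IntegrableOn (fun x => g x * w x) s μ) (hpos : 0 < ∫ x in s, g x ∂μ) :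
    ∫ x in s, g x * w x ∂μ < c * ∫ x in s, g x ∂μ := by
  have hgap_eq : (fun x => g x * (c - w x)) = fun x => c * g x - g x * w x := by
    ext x; ring
  have hgap_int : IntegrableOn (fun x => g x * (c - w x)) s μ := by
    rw [hgap_eq]; exact (hgi.const_mul c).sub hgwi
  have hgap_nonneg : 0 ≤ᵐ[μ.restrict s] fun x => g x * (c - w x) :=
    (ae_restrict_mem hs).mono fun x hx => mul_nonneg (hg x hx) (sub_pos.2 (hw x hx)).le
  have hsupp : Function.support g ∩ s ⊆ Function.support (fun x => g x * (c - w x)) ∩ s :=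
    fun x ⟨hgx, hx⟩ => ⟨mul_ne_zero hgx (sub_pos.2 (hw x hx)).ne', hx⟩
  have hgap_pos : 0 < ∫ x in s, g x * (c - w x) ∂μ := by
    rw [setIntegral_pos_iff_support_of_nonneg_ae hgap_nonneg hgap_int]
    rw [setIntegral_pos_iff_support_of_nonneg_ae
      ((ae_restrict_mem hs).mono fun x hx => hg x hx) hgi] at hpos
    exact hpos.trans_le (measure_mono hsupp)
  rw [hgap_eq, integral_sub (hgi.const_mul c) hgwi, integral_const_mul] at hgap_pos
  linarith

theorem div_lt_div_of_le_mul_of_lt_mul {𝕜 : Type*} [Field 𝕜] [LinearOrder 𝕜]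
    [IsStrictOrderedRing 𝕜] {N₁ N₂ D₁ D₂ k : 𝕜} (hN₁ : N₁ < 0) (hD₁ : 0 < D₁) (hD₂ : 0 < D₂)
    (hN : N₂ ≤ k * N₁) (hD : D₂ < k * D₁) : N₂ / D₂ < N₁ / D₁ := by
  rw [div_lt_div_iff₀ hD₂ hD₁]
  nlinarith

theorem sq_add_sq_div_sq_mul_le {a b t s k : ℝ} (ht : 0 < t) (hs : 0 ≤ s) (hk : t + s ≤ k * t) :
    (a ^ 2 + b ^ 2 / (t + s) ^ 2) * (t + s) ≤ k * ((a ^ 2 + b ^ 2 / t ^ 2) * t) := by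
  have hk1 : 1 ≤ k := by nlinarith
  have hb : b ^ 2 / (t + s) ≤ b ^ 2 / t := by gcongr; linarith
  have hbk : b ^ 2 / t ≤ k * (b ^ 2 / t) := le_mul_of_one_le_left (by positivity) hk1
  have ha : a ^ 2 * (t + s) ≤ k * (a ^ 2 * t) := by nlinarith [sq_nonneg a]
  calc (a ^ 2 + b ^ 2 / (t + s) ^ 2) * (t + s) = a ^ 2 * (t + s) + b ^ 2 / (t + s) := by
        field_simp
    _ ≤ k * (a ^ 2 * t) + k * (b ^ 2 / t) := by linarith
    _ = k * ((a ^ 2 + b ^ 2 / t ^ 2) * t) := by field_simp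

theorem add_sub_le_div_mul {R₁ R₂ t : ℝ} (hR₁ : 0 < R₁) (hR₁₂ : R₁ ≤ R₂) (ht : R₁ ≤ t) :
    t + (R₂ - R₁) ≤ R₂ / R₁ * t := by
  rw [div_mul_eq_mul_div, le_div_iff₀ hR₁]
  nlinarith

theorem add_sub_div_lt_div {R₁ R₂ t : ℝ} (hR₁ : 0 < R₁) (hR₁₂ : R₁ < R₂) (ht : R₁ < t) :
    (t + (R₂ - R₁)) / t < R₂ / R₁ := by
  rw [div_lt_div_iff₀ (hR₁.trans ht) hR₁]
  nlinarith

/-- The quadratic form of the angular momentum `1` fibre of the Robin Laplacian with parameter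
`α` on the exterior of the disk of radius `R`, evaluated on the radial profile `f`. -/
noncomputable def robinForm (α R : ℝ) (f : ℝ → ℝ) : ℝ :=
  (∫ r in Ioi R, (deriv f r ^ 2 + f r ^ 2 / r ^ 2) * r) + α * R * f R ^ 2

noncomputable def radialNormSq (R : ℝ) (f : ℝ → ℝ) : ℝ :=
  ∫ r in Ioi R, f r ^ 2 * r

section Shift

variable {f : ℝ → ℝ} {R₁ R₂ : ℝ}

theorem integrableOn_sq_div_sq_mul_Ioi (hR₁ : 0 < R₁)
    (hfsq : IntegrableOn (fun r => f r ^ 2 * r) (Ioi R₁)) :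
    IntegrableOn (fun r => f r ^ 2 / r ^ 2 * r) (Ioi R₁) := by
  have hbound : ∀ᵐ r ∂volume.restrict (Ioi R₁), ‖(r ^ 2)⁻¹‖ ≤ (R₁ ^ 2)⁻¹ := by
    filter_upwards [ae_restrict_mem measurableSet_Ioi] with r hr
    rw [norm_inv, norm_pow, Real.norm_eq_abs, sq_abs]
    gcongr
    exact hr.le
  have heq : (fun r => f r ^ 2 / r ^ 2 * r) = fun r => f r ^ 2 * r * (r ^ 2)⁻¹ := by
    ext r; ring
  rw [heq]
  exact hfsq.mul_bdd (by fun_prop) hbound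

theorem robinForm_shift_le (α : ℝ) (hR₁ : 0 < R₁) (hR₁₂ : R₁ ≤ R₂)
    (hfsq : IntegrableOn (fun r => f r ^ 2 * r) (Ioi R₁))
    (hf' : IntegrableOn (fun r => deriv f r ^ 2 * r) (Ioi R₁)) :
    robinForm α R₂ (fun x => f (x + R₁ - R₂)) ≤ R₂ / R₁ * robinForm α R₁ f := by
  have hderiv (r : ℝ) : deriv (fun x => f (x + R₁ - R₂)) r = deriv f (r + R₁ - R₂) := by
    simp_rw [add_sub_assoc]
    exact deriv_comp_add_const ..
  have hcancel (t : ℝ) : t + (R₂ - R₁) + R₁ - R₂ = t := by ring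
  have hint : IntegrableOn (fun r => (deriv f r ^ 2 + f r ^ 2 / r ^ 2) * r) (Ioi R₁) := by
    simp_rw [add_mul]
    exact hf'.add (integrableOn_sq_div_sq_mul_Ioi hR₁ hfsq)
  have hintegral : ∫ t in Ioi R₁,
        (deriv f t ^ 2 + f t ^ 2 / (t + (R₂ - R₁)) ^ 2) * (t + (R₂ - R₁)) ≤
      R₂ / R₁ * ∫ r in Ioi R₁, (deriv f r ^ 2 + f r ^ 2 / r ^ 2) * r := by
    rw [← integral_const_mul]
    refine integral_mono_of_nonneg ?_ (hint.const_mul _) ?_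
    · filter_upwards [ae_restrict_mem measurableSet_Ioi] with t (ht : R₁ < t)
      have : 0 < t + (R₂ - R₁) := by linarith
      positivity
    · filter_upwards [ae_restrict_mem measurableSet_Ioi] with t (ht : R₁ < t)
      exact sq_add_sq_div_sq_mul_le (hR₁.trans ht) (sub_nonneg.2 hR₁₂)
        (add_sub_le_div_mul hR₁ hR₁₂ ht.le)
  have hboundary : α * R₂ * f R₁ ^ 2 = R₂ / R₁ * (α * R₁ * f R₁ ^ 2) := by
    field_simp
  unfold robinForm
  rw [setIntegral_Ioi_eq_comp_add _ R₁ R₂]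
  simp only [hderiv, hcancel, add_sub_cancel_left]
  rw [hboundary, mul_add]
  exact add_le_add_left hintegral _

theorem radialNormSq_shift_eq (hR₁ : 0 < R₁) :
    radialNormSq R₂ (fun x => f (x + R₁ - R₂)) =
      ∫ t in Ioi R₁, f t ^ 2 * t * ((t + (R₂ - R₁)) / t) := by
  unfold radialNormSq
  rw [setIntegral_Ioi_eq_comp_add _ R₁ R₂]
  refine setIntegral_congr_fun measurableSet_Ioi fun t (ht : R₁ < t) => ?_
  have : t ≠ 0 := (hR₁.trans ht).ne'
  simp only [show t + (R₂ - R₁) + R₁ - R₂ = t by ring]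
  field_simp

theorem integrableOn_shift_weight (hR₁ : 0 < R₁) (hR₁₂ : R₁ ≤ R₂)
    (hfsq : IntegrableOn (fun r => f r ^ 2 * r) (Ioi R₁)) :
    IntegrableOn (fun t => f t ^ 2 * t * ((t + (R₂ - R₁)) / t)) (Ioi R₁) := by
  refine hfsq.mul_bdd (c := R₂ / R₁)
    (by fun_prop : Measurable fun t : ℝ => (t + (R₂ - R₁)) / t).aestronglyMeasurable ?_
  filter_upwards [ae_restrict_mem measurableSet_Ioi] with t (ht : R₁ < t)
  have ht0 : 0 < t := hR₁.trans ht
  rw [Real.norm_of_nonneg (by have := sub_nonneg.2 hR₁₂; positivity), div_le_iff₀ ht0]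
  exact add_sub_le_div_mul hR₁ hR₁₂ ht.le

theorem radialNormSq_le_shift (hR₁ : 0 < R₁) (hR₁₂ : R₁ ≤ R₂)
    (hfsq : IntegrableOn (fun r => f r ^ 2 * r) (Ioi R₁)) :
    radialNormSq R₁ f ≤ radialNormSq R₂ (fun x => f (x + R₁ - R₂)) := by
  rw [radialNormSq_shift_eq hR₁]
  refine setIntegral_mono_on hfsq (integrableOn_shift_weight hR₁ hR₁₂ hfsq) measurableSet_Ioi
    fun t (ht : R₁ < t) => ?_
  have ht0 : 0 < t := hR₁.trans ht
  refine le_mul_of_one_le_right (by positivity) ?_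
  rw [le_div_iff₀ ht0]
  linarith

theorem radialNormSq_shift_lt (hR₁ : 0 < R₁) (hR₁₂ : R₁ < R₂)
    (hfsq : IntegrableOn (fun r => f r ^ 2 * r) (Ioi R₁)) (hfpos : 0 < radialNormSq R₁ f) :
    radialNormSq R₂ (fun x => f (x + R₁ - R₂)) < R₂ / R₁ * radialNormSq R₁ f := by
  rw [radialNormSq_shift_eq hR₁]
  exact setIntegral_mul_lt_mul_setIntegral measurableSet_Ioi
    (fun t (ht : R₁ < t) => by have := hR₁.trans ht; positivity)
    (fun t ht => add_sub_div_lt_div hR₁ hR₁₂ ht) hfsq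
    (integrableOn_shift_weight hR₁ hR₁₂.le hfsq) hfpos

end Shift

theorem stmt_10_general (α R₁ R₂ : ℝ) (hR₁ : 0 < R₁) (hR₁₂ : R₁ < R₂)
    (f : ℝ → ℝ)
    (hfsq : IntegrableOn (fun r => (f r) ^ 2 * r) (Set.Ioi R₁))
    (hfpos : 0 < ∫ r in Set.Ioi R₁, (f r) ^ 2 * r)
    (hf' : IntegrableOn (fun r => (deriv f r) ^ 2 * r) (Set.Ioi R₁))
    (hN : (∫ r in Set.Ioi R₁, ((deriv f r) ^ 2 + (f r) ^ 2 / r ^ 2) * r) +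
        α * R₁ * (f R₁) ^ 2 < 0) :
    ((∫ r in Set.Ioi R₂,
        ((deriv (fun x => f (x + R₁ - R₂)) r) ^ 2 +
          (f (r + R₁ - R₂)) ^ 2 / r ^ 2) * r) +
      α * R₂ * (f R₁) ^ 2) /
        (∫ r in Set.Ioi R₂, (f (r + R₁ - R₂)) ^ 2 * r) <
    ((∫ r in Set.Ioi R₁, ((deriv f r) ^ 2 + (f r) ^ 2 / r ^ 2) * r) +
      α * R₁ * (f R₁) ^ 2) /
        (∫ r in Set.Ioi R₁, (f r) ^ 2 * r) := by
  have hmass_pos := hfpos.trans_le (radialNormSq_le_shift hR₁ hR₁₂.le hfsq)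
  have key := div_lt_div_of_le_mul_of_lt_mul hN hfpos hmass_pos
    (robinForm_shift_le α hR₁ hR₁₂.le hfsq hf') (radialNormSq_shift_lt hR₁ hR₁₂ hfsq hfpos)
  simpa only [robinForm, radialNormSq, add_sub_cancel_left] using key

/-- Strict monotonicity in the radius of the Rayleigh quotient of the angular
momentum `1` fibre of the Robin Laplacian on the exterior of a disk: if
`0 < R₁ < R₂`, `f` is `C¹` on `[R₁,∞)` with the stated integrability and
positivity properties and negative Rayleigh numerator `N₁` at radius `R₁`,
then the Rayleigh quotient of the shifted function `f₂(r) = f(r + R₁ - R₂)`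
at radius `R₂` is strictly smaller than that of `f` at radius `R₁`. -/
theorem stmt_10 (α R₁ R₂ : ℝ) (hR₁ : 0 < R₁) (hR₁₂ : R₁ < R₂)
    (f : ℝ → ℝ) (hf : ContDiff ℝ 1 f)
    (hfsq : IntegrableOn (fun r => (f r) ^ 2 * r) (Set.Ioi R₁))
    (hfpos : 0 < ∫ r in Set.Ioi R₁, (f r) ^ 2 * r)
    (hf' : IntegrableOn (fun r => (deriv f r) ^ 2 * r) (Set.Ioi R₁))
    (hN : (∫ r in Set.Ioi R₁, ((deriv f r) ^ 2 + (f r) ^ 2 / r ^ 2) * r) +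
        α * R₁ * (f R₁) ^ 2 < 0) :
    ((∫ r in Set.Ioi R₂,
        ((deriv (fun x => f (x + R₁ - R₂)) r) ^ 2 +
          (f (r + R₁ - R₂)) ^ 2 / r ^ 2) * r) +
      α * R₂ * (f R₁) ^ 2) /
        (∫ r in Set.Ioi R₂, (f (r + R₁ - R₂)) ^ 2 * r) <
    ((∫ r in Set.Ioi R₁, ((deriv f r) ^ 2 + (f r) ^ 2 / r ^ 2) * r) +
      α * R₁ * (f R₁) ^ 2) /
        (∫ r in Set.Ioi R₁, (f r) ^ 2 * r) :=
  stmt_10_general α R₁ R₂ hR₁ hR₁₂ f hfsq hfpos hf' hN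
end

section
/- Let α ∈ ℝ, R > 0 and L > 2πR. Let f : [0,∞) → ℝ be continuously differentiable with 0 < ∫₀^∞ f(t)²·(1+t) dt < ∞ and ∫₀^∞ f'(t)²·(1+t) dt < ∞. Suppose Q_R := [ ∫₀^∞ f'(t)²·(R+t) dt + α·R·f(0)² ] / ∫₀^∞ f(t)²·(R+t) dt < 0. Then [ ∫₀^∞ f'(t)²·(L + 2πt) dt + α·L·f(0)² ] / ∫₀^∞ f(t)²·(L + 2πt) dt < Q_R. -/
open MeasureTheory Set

/-!
Write `F = ∫ f²`, `F₁ = ∫ f² t`, `P = ∫ f'²`, `P₁ = ∫ f'² t` and `q = P + α f(0)²`. Splitting the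
weights linearly, both quotients are values of `r ↦ (r q + P₁) / (r F + F₁)`, at `r = R` and at
`r = L / 2π > R`. Cross-multiplying, the difference of the two sides has the sign of
`(L - 2πR)(q F₁ - P₁ F)`. Since `Q_R < 0` and `P₁ ≥ 0`, `q < 0`; and `F₁ > 0` because `f` is not
a.e. zero on `(0, ∞)`. Hence `q F₁ - P₁ F < 0`.
-/

lemma MeasureTheory.IntegrableOn.mul_affine_of_mul_one_add {h : ℝ → ℝ}
    (hi : IntegrableOn (fun t => h t * (1 + t)) (Ioi 0)) (a b : ℝ) :
    IntegrableOn (fun t => h t * (a + b * t)) (Ioi 0) := by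
  have hbdd : ∀ t ∈ Ioi (0 : ℝ), ‖(a + b * t) / (1 + t)‖ ≤ |a| + |b| := by
    intro t (ht : 0 < t)
    rw [Real.norm_eq_abs, abs_div, abs_of_pos (by linarith : (0 : ℝ) < 1 + t),
      div_le_iff₀ (by linarith)]
    calc |a + b * t| ≤ |a| + |b| * t := by
          simpa [abs_mul, abs_of_pos ht] using abs_add_le a (b * t)
      _ ≤ (|a| + |b|) * (1 + t) := by nlinarith [abs_nonneg a, abs_nonneg b]
  refine IntegrableOn.congr_fun (Integrable.mul_bdd hi
    (by fun_prop : Measurable fun t : ℝ => (a + b * t) / (1 + t)).aestronglyMeasurable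
    ((ae_restrict_iff' measurableSet_Ioi).2 (Filter.Eventually.of_forall hbdd)))
    (fun t (ht : 0 < t) => ?_) measurableSet_Ioi
  field_simp

lemma setIntegral_Ioi_mul_affine {h : ℝ → ℝ}
    (hi : IntegrableOn (fun t => h t * (1 + t)) (Ioi 0)) (a b : ℝ) :
    ∫ t in Ioi 0, h t * (a + b * t) =
      a * (∫ t in Ioi 0, h t) + b * ∫ t in Ioi 0, h t * t := by
  have h₀ : IntegrableOn h (Ioi 0) := by
    simpa using hi.mul_affine_of_mul_one_add 1 0
  have h₁ : IntegrableOn (fun t => h t * t) (Ioi 0) := by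
    simpa using hi.mul_affine_of_mul_one_add 0 1
  rw [← integral_const_mul, ← integral_const_mul,
    ← integral_add (h₀.const_mul a) (h₁.const_mul b)]
  exact integral_congr_ae (Filter.Eventually.of_forall fun t => by ring)

lemma setIntegral_mul_pos_of_pos {X : Type*} [MeasurableSpace X] {μ : Measure X} {s : Set X}
    {h v w : X → ℝ} (hs : MeasurableSet s) (hh : ∀ x ∈ s, 0 ≤ h x) (hv : ∀ x ∈ s, 0 < v x)
    (hw : ∀ x ∈ s, 0 < w x) (hiv : IntegrableOn (fun x => h x * v x) s μ)
    (hiw : IntegrableOn (fun x => h x * w x) s μ) (hpos : 0 < ∫ x in s, h x * v x ∂μ) :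
    0 < ∫ x in s, h x * w x ∂μ := by
  have hnonneg : ∀ u : X → ℝ, (∀ x ∈ s, 0 < u x) → 0 ≤ᵐ[μ.restrict s] fun x => h x * u x :=
    fun u hu => (ae_restrict_iff' hs).2 (Filter.Eventually.of_forall fun x hx =>
      mul_nonneg (hh x hx) (hu x hx).le)
  have hsupp : ∀ u : X → ℝ, (∀ x ∈ s, 0 < u x) →
      Function.support (fun x => h x * u x) ∩ s = Function.support h ∩ s := by
    intro u hu
    ext x
    simp only [mem_inter_iff, Function.mem_support, and_congr_left_iff]
    exact fun hx => by simp [(hu x hx).ne']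
  rw [setIntegral_pos_iff_support_of_nonneg_ae (hnonneg v hv) hiv, hsupp v hv] at hpos
  rwa [setIntegral_pos_iff_support_of_nonneg_ae (hnonneg w hw) hiw, hsupp w hw]

lemma affine_ratio_lt {q p₁ m₀ m₁ R L k : ℝ} (hm₀ : 0 ≤ m₀) (hm₁ : 0 < m₁) (hp₁ : 0 ≤ p₁)
    (hR : 0 < R) (hk : 0 < k) (hL : k * R < L)
    (hneg : (R * q + p₁) / (R * m₀ + m₁) < 0) :
    (L * q + k * p₁) / (L * m₀ + k * m₁) < (R * q + p₁) / (R * m₀ + m₁) := by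
  have hden : 0 < R * m₀ + m₁ := by positivity
  have hq : q < 0 := by
    have := (div_neg_iff.mp hneg).resolve_left (fun h => h.2.not_gt hden)
    nlinarith [this.1]
  have hL₀ : 0 < L := by nlinarith
  rw [div_lt_div_iff₀ (by positivity) hden]
  -- the difference of the cross products is (L - kR)(q m₁ - p₁ m₀)
  nlinarith [mul_pos (sub_pos.2 hL) (mul_pos (neg_pos.2 hq) hm₁),
    mul_nonneg (sub_pos.2 hL).le (mul_nonneg hp₁ hm₀)]

theorem stmt_11_general (α R L : ℝ) (hR : 0 < R) (hL : 2 * Real.pi * R < L)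
    (f : ℝ → ℝ)
    (hfsq : IntegrableOn (fun t => (f t) ^ 2 * (1 + t)) (Set.Ioi (0 : ℝ)))
    (hfpos : 0 < ∫ t in Set.Ioi (0 : ℝ), (f t) ^ 2 * (1 + t))
    (hf' : IntegrableOn (fun t => (deriv f t) ^ 2 * (1 + t)) (Set.Ioi (0 : ℝ)))
    (hQ : ((∫ t in Set.Ioi (0 : ℝ), (deriv f t) ^ 2 * (R + t)) +
          α * R * (f 0) ^ 2) /
        (∫ t in Set.Ioi (0 : ℝ), (f t) ^ 2 * (R + t)) < 0) :
    ((∫ t in Set.Ioi (0 : ℝ), (deriv f t) ^ 2 * (L + 2 * Real.pi * t)) +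
        α * L * (f 0) ^ 2) /
      (∫ t in Set.Ioi (0 : ℝ), (f t) ^ 2 * (L + 2 * Real.pi * t)) <
    ((∫ t in Set.Ioi (0 : ℝ), (deriv f t) ^ 2 * (R + t)) +
        α * R * (f 0) ^ 2) /
      (∫ t in Set.Ioi (0 : ℝ), (f t) ^ 2 * (R + t)) := by
  have hmoment : 0 < ∫ t in Ioi 0, f t ^ 2 * t :=
    setIntegral_mul_pos_of_pos measurableSet_Ioi (fun t _ => sq_nonneg _)
      (fun t (ht : 0 < t) => by linarith) (fun t ht => ht) hfsq
      (by simpa using hfsq.mul_affine_of_mul_one_add 0 1) hfpos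
  have hsplitR : ∀ g : ℝ → ℝ, IntegrableOn (fun t => g t ^ 2 * (1 + t)) (Ioi 0) →
      ∫ t in Ioi 0, g t ^ 2 * (R + t) = R * (∫ t in Ioi 0, g t ^ 2) + ∫ t in Ioi 0, g t ^ 2 * t :=
    fun g hg => by simpa only [one_mul] using setIntegral_Ioi_mul_affine hg R 1
  rw [hsplitR f hfsq, hsplitR _ hf'] at hQ ⊢
  rw [setIntegral_Ioi_mul_affine hfsq, setIntegral_Ioi_mul_affine hf']
  convert affine_ratio_lt (q := (∫ t in Ioi 0, deriv f t ^ 2) + α * f 0 ^ 2)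
    (setIntegral_nonneg measurableSet_Ioi fun t _ => sq_nonneg (f t)) hmoment
    (setIntegral_nonneg measurableSet_Ioi fun t (ht : 0 < t) =>
      mul_nonneg (sq_nonneg (deriv f t)) ht.le) hR (by positivity) hL
    (by convert hQ using 2; ring) using 2 <;> ring

/-- If `L > 2πR`, the Rayleigh quotient of the radial trial function on the
exterior of a convex domain of perimeter `L` is strictly smaller than the
(negative) Rayleigh quotient `Q_R` of the radial fibre on the exterior of a
disk of radius `R`. -/
theorem stmt_11 (α R L : ℝ) (hR : 0 < R) (hL : 2 * Real.pi * R < L)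
    (f : ℝ → ℝ) (hf : ContDiff ℝ 1 f)
    (hfsq : IntegrableOn (fun t => (f t) ^ 2 * (1 + t)) (Set.Ioi (0 : ℝ)))
    (hfpos : 0 < ∫ t in Set.Ioi (0 : ℝ), (f t) ^ 2 * (1 + t))
    (hf' : IntegrableOn (fun t => (deriv f t) ^ 2 * (1 + t)) (Set.Ioi (0 : ℝ)))
    (hQ : ((∫ t in Set.Ioi (0 : ℝ), (deriv f t) ^ 2 * (R + t)) +
          α * R * (f 0) ^ 2) /
        (∫ t in Set.Ioi (0 : ℝ), (f t) ^ 2 * (R + t)) < 0) :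
    ((∫ t in Set.Ioi (0 : ℝ), (deriv f t) ^ 2 * (L + 2 * Real.pi * t)) +
        α * L * (f 0) ^ 2) /
      (∫ t in Set.Ioi (0 : ℝ), (f t) ^ 2 * (L + 2 * Real.pi * t)) <
    ((∫ t in Set.Ioi (0 : ℝ), (deriv f t) ^ 2 * (R + t)) +
        α * R * (f 0) ^ 2) /
      (∫ t in Set.Ioi (0 : ℝ), (f t) ^ 2 * (R + t)) :=
  stmt_11_general α R L hR hL f hfsq hfpos hf' hQ
end

section
/- Let α ∈ ℝ, R > 0 and L > 2πR. Let g : [0,∞) → ℝ be continuously differentiable with 0 < ∫₀^∞ g(t)²·(1+t) dt < ∞ and ∫₀^∞ g'(t)²·(1+t) dt < ∞. Suppose Q_R := [ ∫₀^∞ g'(t)²·(R+t) dt + ∫₀^∞ g(t)²/(R+t) dt + α·R·g(0)² ] / ∫₀^∞ g(t)²·(R+t) dt < 0. Then [ ∫₀^∞ g'(t)²·(L + 2πt) dt + (L/R)·∫₀^∞ g(t)²/(R+t) dt + α·L·g(0)² ] / ∫₀^∞ g(t)²·(L + 2πt) dt < Q_R. -/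
open MeasureTheory

/-- If `L > 2πR`, the (curvature-estimated) Rayleigh quotient of the angular
trial function on the exterior of a convex domain of perimeter `L` whose
boundary has the same elastic energy as the circle of radius `R` is strictly
smaller than the (negative) Rayleigh quotient `Q_R` of the angular momentum `1`
fibre on the exterior of the disk of radius `R`. -/
theorem stmt_12 (α R L : ℝ) (hR : 0 < R) (hL : 2 * Real.pi * R < L)
    (g : ℝ → ℝ) (hg : ContDiff ℝ 1 g)
    (hgsq : IntegrableOn (fun t => (g t) ^ 2 * (1 + t)) (Set.Ioi (0 : ℝ)))
    (hgpos : 0 < ∫ t in Set.Ioi (0 : ℝ), (g t) ^ 2 * (1 + t))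
    (hg' : IntegrableOn (fun t => (deriv g t) ^ 2 * (1 + t)) (Set.Ioi (0 : ℝ)))
    (hQ : ((∫ t in Set.Ioi (0 : ℝ), (deriv g t) ^ 2 * (R + t)) +
          (∫ t in Set.Ioi (0 : ℝ), (g t) ^ 2 / (R + t)) +
          α * R * (g 0) ^ 2) /
        (∫ t in Set.Ioi (0 : ℝ), (g t) ^ 2 * (R + t)) < 0) :
    ((∫ t in Set.Ioi (0 : ℝ), (deriv g t) ^ 2 * (L + 2 * Real.pi * t)) +
        (L / R) * (∫ t in Set.Ioi (0 : ℝ), (g t) ^ 2 / (R + t)) +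
        α * L * (g 0) ^ 2) /
      (∫ t in Set.Ioi (0 : ℝ), (g t) ^ 2 * (L + 2 * Real.pi * t)) <
    ((∫ t in Set.Ioi (0 : ℝ), (deriv g t) ^ 2 * (R + t)) +
        (∫ t in Set.Ioi (0 : ℝ), (g t) ^ 2 / (R + t)) +
        α * R * (g 0) ^ 2) /
      (∫ t in Set.Ioi (0 : ℝ), (g t) ^ 2 * (R + t)) := by
  have hπ : (0:ℝ) < Real.pi := Real.pi_pos
  have hL0 : 0 < L := lt_trans (by positivity) hL
  have hs : 2 * Real.pi < L / R := (lt_div_iff₀ hR).mpr hL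
  have hs0 : 0 < L / R := by positivity
  have hsR : L / R * R = L := div_mul_cancel₀ L hR.ne'
  have hgc : Continuous g := hg.continuous
  have hg'c : Continuous (deriv g) := hg.continuous_deriv le_rfl
  -- integrability package
  have key : ∀ (h : ℝ → ℝ), Continuous h →
      IntegrableOn (fun t => h t ^ 2 * (1 + t)) (Set.Ioi 0) →
      ∀ a b : ℝ, IntegrableOn (fun t => h t ^ 2 * (a + b * t)) (Set.Ioi 0) := by
    intro h hc hint a b
    have h2 : IntegrableOn (fun t => h t ^ 2) (Set.Ioi 0) := by
      refine hint.mono' ((hc.pow 2).aestronglyMeasurable) ?_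
      filter_upwards [ae_restrict_mem measurableSet_Ioi] with t ht
      have h0 : (0:ℝ) < t := ht
      rw [Real.norm_eq_abs, abs_of_nonneg (by positivity)]
      nlinarith [sq_nonneg (h t)]
    have ht : IntegrableOn (fun t => h t ^ 2 * t) (Set.Ioi 0) := by
      have e : (fun t => h t ^ 2 * t) =
          fun t => h t ^ 2 * (1 + t) - h t ^ 2 := by funext t; ring
      rw [e]; exact hint.sub h2
    have e : (fun t => h t ^ 2 * (a + b * t)) =
        fun t => a * h t ^ 2 + b * (h t ^ 2 * t) := by funext t; ring
    rw [e]; exact (h2.const_mul a).add (ht.const_mul b)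
  have igt : IntegrableOn (fun t => g t ^ 2 * t) (Set.Ioi 0) := by
    have := key g hgc hgsq 0 1
    simpa using this
  have igR : IntegrableOn (fun t => g t ^ 2 * (R + t)) (Set.Ioi 0) := by
    have := key g hgc hgsq R 1
    simpa using this
  have igL : IntegrableOn (fun t => g t ^ 2 * (L + 2 * Real.pi * t)) (Set.Ioi 0) :=
    key g hgc hgsq L (2 * Real.pi)
  have ig'R : IntegrableOn (fun t => deriv g t ^ 2 * (R + t)) (Set.Ioi 0) := by
    have := key (deriv g) hg'c hg' R 1
    simpa using this
  have ig'L : IntegrableOn (fun t => deriv g t ^ 2 * (L + 2 * Real.pi * t)) (Set.Ioi 0) :=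
    key (deriv g) hg'c hg' L (2 * Real.pi)
  -- positivity of ∫ g² t
  have Jt : 0 < ∫ t in Set.Ioi (0:ℝ), g t ^ 2 * t := by
    rcases lt_or_ge 0 (∫ t in Set.Ioi (0:ℝ), g t ^ 2 * t) with h | h
    · exact h
    have hnn : 0 ≤ ∫ t in Set.Ioi (0:ℝ), g t ^ 2 * t := by
      refine setIntegral_nonneg measurableSet_Ioi fun t ht => ?_
      have : (0:ℝ) < t := ht
      positivity
    have hz : (∫ t in Set.Ioi (0:ℝ), g t ^ 2 * t) = 0 := le_antisymm h hnn
    have hae : (fun t => g t ^ 2 * t) =ᵐ[volume.restrict (Set.Ioi (0:ℝ))] 0 := by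
      refine (integral_eq_zero_iff_of_nonneg_ae ?_ igt).mp hz
      filter_upwards [ae_restrict_mem measurableSet_Ioi] with t ht
      have : (0:ℝ) < t := ht
      positivity
    have hae2 : (fun t => g t ^ 2 * (1 + t)) =ᵐ[volume.restrict (Set.Ioi (0:ℝ))] 0 := by
      filter_upwards [hae, ae_restrict_mem measurableSet_Ioi] with t ht1 ht2
      have ht : (0:ℝ) < t := ht2
      have : g t ^ 2 * t = 0 := ht1
      have hg0 : g t ^ 2 = 0 := by
        rcases mul_eq_zero.mp this with h' | h'
        · exact h'
        · exact absurd h' ht.ne'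
      simp [hg0]
    have : (∫ t in Set.Ioi (0:ℝ), g t ^ 2 * (1 + t)) = 0 := by
      rw [integral_congr_ae hae2]; simp
    linarith
  -- denominators positive
  have hD : 0 < ∫ t in Set.Ioi (0:ℝ), g t ^ 2 * (R + t) := by
    refine lt_of_lt_of_le Jt ?_
    refine setIntegral_mono_on igt igR measurableSet_Ioi fun t ht => ?_
    have : (0:ℝ) < t := ht
    nlinarith [sq_nonneg (g t)]
  have hD' : 0 < ∫ t in Set.Ioi (0:ℝ), g t ^ 2 * (L + 2 * Real.pi * t) := by
    refine lt_of_lt_of_le Jt ?_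
    refine setIntegral_mono_on igt igL measurableSet_Ioi fun t ht => ?_
    have ht0 : (0:ℝ) < t := ht
    nlinarith [mul_nonneg (sq_nonneg (g t)) hL0.le,
      mul_nonneg (mul_nonneg (sq_nonneg (g t)) ht0.le)
        (by nlinarith [Real.pi_gt_three] : (0:ℝ) ≤ 2 * Real.pi - 1)]
  -- D' < (L/R) * D (strict)
  have hDlt : (∫ t in Set.Ioi (0:ℝ), g t ^ 2 * (L + 2 * Real.pi * t)) <
      L / R * ∫ t in Set.Ioi (0:ℝ), g t ^ 2 * (R + t) := by
    have hgap : L / R * (∫ t in Set.Ioi (0:ℝ), g t ^ 2 * (R + t)) -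
        (∫ t in Set.Ioi (0:ℝ), g t ^ 2 * (L + 2 * Real.pi * t)) =
        (L / R - 2 * Real.pi) * ∫ t in Set.Ioi (0:ℝ), g t ^ 2 * t := by
      rw [← integral_const_mul, ← integral_const_mul, ← integral_sub (igR.const_mul _) igL]
      congr 1
      funext t
      linear_combination g t ^ 2 * hsR
    nlinarith [mul_pos (sub_pos.mpr hs) Jt]
  -- numerator comparison: ∫ g'²(L+2πt) ≤ (L/R) ∫ g'²(R+t)
  have hNum : (∫ t in Set.Ioi (0:ℝ), deriv g t ^ 2 * (L + 2 * Real.pi * t)) ≤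
      L / R * ∫ t in Set.Ioi (0:ℝ), deriv g t ^ 2 * (R + t) := by
    rw [← integral_const_mul]
    refine setIntegral_mono_on ig'L (ig'R.const_mul _) measurableSet_Ioi fun t ht => ?_
    have ht0 : (0:ℝ) < t := ht
    nlinarith [sq_nonneg (deriv g t), mul_nonneg (sub_pos.mpr hs).le ht0.le]
  -- abbreviations
  set A := ∫ t in Set.Ioi (0:ℝ), deriv g t ^ 2 * (R + t) with hA
  set B := ∫ t in Set.Ioi (0:ℝ), (g t) ^ 2 / (R + t) with hB
  set D := ∫ t in Set.Ioi (0:ℝ), g t ^ 2 * (R + t) with hDdef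
  set A' := ∫ t in Set.Ioi (0:ℝ), deriv g t ^ 2 * (L + 2 * Real.pi * t) with hA'
  set D' := ∫ t in Set.Ioi (0:ℝ), g t ^ 2 * (L + 2 * Real.pi * t) with hD'def
  have hN : A + B + α * R * g 0 ^ 2 < 0 := by
    by_contra h
    push_neg at h
    exact absurd (div_nonneg h hD.le) (not_le.mpr hQ)
  have hN' : A' + L / R * B + α * L * g 0 ^ 2 ≤ L / R * (A + B + α * R * g 0 ^ 2) := by
    have : L / R * (α * R * g 0 ^ 2) = α * L * g 0 ^ 2 := by
      field_simp
    nlinarith [hNum]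
  have hsN : L / R * (A + B + α * R * g 0 ^ 2) < 0 := mul_neg_of_pos_of_neg hs0 hN
  calc (A' + L / R * B + α * L * g 0 ^ 2) / D'
      ≤ (L / R * (A + B + α * R * g 0 ^ 2)) / D' := by
        exact div_le_div_of_nonneg_right hN' hD'.le |>.trans_eq rfl
    _ < (L / R * (A + B + α * R * g 0 ^ 2)) / (L / R * D) := by
        rw [div_eq_mul_inv, div_eq_mul_inv]
        exact mul_lt_mul_of_neg_left ((inv_lt_inv₀ (by positivity) hD').mpr hDlt) hsN
    _ = (A + B + α * R * g 0 ^ 2) / D := mul_div_mul_left _ _ hs0.ne'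
end
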